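/- arXiv:1505.04304 — 2 statements merged into one kernel-verified Lean document; each statement's English description precedes it below -/
import Mathlib

section
/- Let A and B be normal ideals of the pseudo MV-algebra M = Γ(G,u). Then the normal ideal generated by A ∪ B satisfies ⟨A ∪ B⟩_n = {x ∈ M : x ≤ a ⊕ b for some a ∈ A, b ∈ B} = {x ∈ M : x = a ⊕ b for some a ∈ A, b ∈ B} = A ⊕ B. -/
variable {G : Type*} [Lattice G] [AddGroup G]
  [CovariantClass G G (· + ·) (· ≤ ·)]
  [CovariantClass G G (Function.swap (· + ·)) (· ≤ ·)]

/-- `u` is a strong unit of the lattice-ordered group `G`. -/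
def IsStrongUnit (u : G) : Prop := 0 ≤ u ∧ ∀ x : G, ∃ n : ℕ, x ≤ n • u

/-- The operation `x ⊕ y := (x + y) ⊓ u` of the pseudo MV-algebra `Γ(G,u)`. -/
def oplus (u x y : G) : G := (x + y) ⊓ u

/-- The operation `x ⊙ y := (x - u + y) ⊔ 0` of the pseudo MV-algebra `Γ(G,u)`. -/
def odot (u x y : G) : G := (x - u + y) ⊔ 0

/-- `n.x := x ⊕ ⋯ ⊕ x` (`n` summands), with `0.x = 0`. -/
def nOplus (u : G) : ℕ → G → G
  | 0, _ => 0
  | n + 1, x => oplus u (nOplus u n x) x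

/-- `I` is an ideal of the pseudo MV-algebra with carrier `C ⊆ Γ(G,u)`:
a nonempty subset of `C`, downward closed within `C`, and closed under `⊕`. -/
def IsIdealIn (u : G) (C I : Set G) : Prop :=
  I ⊆ C ∧ I.Nonempty ∧ (∀ x ∈ I, ∀ y ∈ C, y ≤ x → y ∈ I) ∧
    ∀ x ∈ I, ∀ y ∈ I, oplus u x y ∈ I

/-- `I` is a normal ideal: `x ⊕ I = I ⊕ x` for all `x ∈ C`. -/
def IsNormalIdealIn (u : G) (C I : Set G) : Prop :=
  IsIdealIn u C I ∧ ∀ x ∈ C, (fun i => oplus u x i) '' I = (fun i => oplus u i x) '' I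

/-- `⟨X⟩_n`, the smallest normal ideal (of the carrier `C`) containing `X`. -/
def normalGenIn (u : G) (C X : Set G) : Set G :=
  ⋂₀ {I | IsNormalIdealIn u C I ∧ X ⊆ I}

/-- The polar `X^⊥ = {y ∈ C : y ∧ x = 0 for all x ∈ X}` computed in carrier `C`. -/
def polarIn (C X : Set G) : Set G := {y ∈ C | ∀ x ∈ X, y ⊓ x = 0}

/-- `A ⊕ B := {a ⊕ b : a ∈ A, b ∈ B}`. -/
def setOplus (u : G) (A B : Set G) : Set G := Set.image2 (oplus u) A B

/-- `↓a` computed within the carrier `C`. -/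
def dsetIn (C : Set G) (a : G) : Set G := {x ∈ C | x ≤ a}

/-- `I` is a summand-ideal of the carrier `C`: a normal ideal such that for
some normal ideal `J`, `I ∩ J = {0}` and `⟨I ∪ J⟩_n = C`. -/
def IsSummandIdealIn (u : G) (C I : Set G) : Prop :=
  IsNormalIdealIn u C I ∧ ∃ J, IsNormalIdealIn u C J ∧ I ∩ J = {0} ∧
    normalGenIn u C (I ∪ J) = C

/-- `I` is a polar ideal of the carrier `C`: `I = I^⊥⊥`. -/
def IsPolarIdealIn (C I : Set G) : Prop := polarIn C (polarIn C I) = I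

/-- `a` is a Boolean element of the carrier `C`: `a ∈ C` and `a ⊕ a = a`. -/
def IsBooleanIn (u : G) (C : Set G) (a : G) : Prop := a ∈ C ∧ oplus u a a = a

/-- The carrier `C` is strongly projectable: every polar ideal is a summand-ideal. -/
def IsStronglyProjectableIn (u : G) (C : Set G) : Prop :=
  ∀ I : Set G, IsPolarIdealIn C I → IsSummandIdealIn u C I

/-- `N` is a subalgebra of `Γ(G,u)`: contains `0` and `u`, closed under `⊕`,
`x⁻ = u - x` and `x∼ = -x + u`. -/
def IsSubalg (u : G) (N : Set G) : Prop :=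
  N ⊆ Set.Icc 0 u ∧ 0 ∈ N ∧ u ∈ N ∧
    (∀ x ∈ N, ∀ y ∈ N, oplus u x y ∈ N) ∧
    (∀ x ∈ N, u - x ∈ N) ∧ (∀ x ∈ N, -x + u ∈ N)

/-- `N` is a large subalgebra of `Γ(G,u)`: for every nonzero `y ∈ Γ(G,u)` there
are `n ∈ ℕ` and a nonzero `x ∈ N` with `x ≤ n.y`. -/
def IsLargeSubalg (u : G) (N : Set G) : Prop :=
  IsSubalg u N ∧ ∀ y ∈ Set.Icc (0 : G) u, y ≠ 0 →
    ∃ n : ℕ, ∃ x ∈ N, x ≠ 0 ∧ x ≤ nOplus u n y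

/-!
Every ideal containing `A ∪ B` contains `A ⊕ B`, so it suffices to show that `A ⊕ B` is a normal
ideal. It is downward closed by the Riesz decomposition property of `G`: `x ≤ a + b` with
`a, b ≥ 0` splits as `x = a₁ ⊕ b₁` with `a₁ ≤ a`, `b₁ ≤ b`; this also gives the description of
`A ⊕ B` by `x ≤ a ⊕ b`. Closure under `⊕` and normality hold because normality of `A` and `B`
lets their elements be moved past any `x ∈ Γ(G,u)`: e.g. `b ⊕ a' = a₂ ⊕ b` for some `a₂ ∈ A`, so
`(a ⊕ b) ⊕ (a' ⊕ b') = (a ⊕ a₂) ⊕ (b ⊕ b')`.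
-/

section Oplus

variable {α : Type*} [Lattice α] [AddGroup α] {u : α}

lemma oplus_mem_Icc [AddLeftMono α] (hu : 0 ≤ u) {x y : α} (hx : x ∈ Set.Icc (0 : α) u)
    (hy : y ∈ Set.Icc (0 : α) u) : oplus u x y ∈ Set.Icc (0 : α) u :=
  ⟨le_inf (add_nonneg hx.1 hy.1) hu, inf_le_right⟩

lemma oplus_le_add {x y : α} : oplus u x y ≤ x + y := inf_le_left

lemma oplus_zero_right {x : α} (hx : x ≤ u) : oplus u x 0 = x := by
  rw [oplus, add_zero, inf_eq_left.2 hx]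

lemma oplus_zero_left {x : α} (hx : x ≤ u) : oplus u 0 x = x := by
  rw [oplus, zero_add, inf_eq_left.2 hx]

lemma oplus_assoc_of_nonneg [AddLeftMono α] [AddRightMono α] {x y z : α} (hx : 0 ≤ x)
    (hz : 0 ≤ z) :
    oplus u (oplus u x y) z = oplus u x (oplus u y z) := by
  have hleft : oplus u (oplus u x y) z = (x + y + z) ⊓ u := by
    rw [oplus, oplus, inf_add, inf_assoc, inf_eq_right.2 (le_add_of_nonneg_right hz)]
  have hright : oplus u x (oplus u y z) = (x + (y + z)) ⊓ u := by
    rw [oplus, oplus, add_inf, inf_assoc, inf_eq_right.2 (le_add_of_nonneg_left hx)]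
  rw [hleft, hright, add_assoc]

/-- Riesz decomposition, with the witnesses `a₁ = x ⊓ a` and `b₁ = -a₁ + x`. -/
lemma exists_eq_oplus_of_le_add [AddLeftMono α] [AddRightMono α] {a b x : α}
    (hx : x ∈ Set.Icc (0 : α) u) (ha : 0 ≤ a) (hb : 0 ≤ b) (h : x ≤ a + b) :
    ∃ a₁ b₁ : α, 0 ≤ a₁ ∧ 0 ≤ b₁ ∧ a₁ ≤ a ∧ b₁ ≤ b ∧ x = oplus u a₁ b₁ := by
  have hb₁ : -(x ⊓ a) + x = 0 ⊔ (-a + x) := by rw [neg_inf, sup_add, neg_add_cancel]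
  refine ⟨x ⊓ a, -(x ⊓ a) + x, le_inf hx.1 ha, ?_, inf_le_right, ?_, ?_⟩
  · exact hb₁ ▸ le_sup_left
  · exact hb₁ ▸ sup_le hb (neg_add_le_iff_le_add.2 h)
  · rw [oplus, add_neg_cancel_left, inf_eq_left.2 hx.2]

end Oplus

section Ideals

variable {α : Type*} [Lattice α] [AddGroup α] {u : α} {C I : Set α}

lemma IsIdealIn.zero_le (hI : IsIdealIn u (Set.Icc 0 u) I) : (0 : α) ≤ u :=
  let ⟨_, hx⟩ := hI.2.1
  (hI.1 hx).1.trans (hI.1 hx).2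

lemma IsIdealIn.zero_mem (hI : IsIdealIn u (Set.Icc 0 u) I) : (0 : α) ∈ I :=
  let ⟨x, hx⟩ := hI.2.1
  hI.2.2.1 x hx 0 ⟨le_rfl, hI.zero_le⟩ (hI.1 hx).1

lemma IsNormalIdealIn.exists_mem_oplus_eq (hI : IsNormalIdealIn u C I) {x a : α} (hx : x ∈ C)
    (ha : a ∈ I) : ∃ a' ∈ I, oplus u a' x = oplus u x a := by
  have h : oplus u x a ∈ (fun i => oplus u i x) '' I := hI.2 x hx ▸ Set.mem_image_of_mem _ ha
  exact h

lemma IsNormalIdealIn.exists_oplus_mem_eq (hI : IsNormalIdealIn u C I) {x a : α} (hx : x ∈ C)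
    (ha : a ∈ I) : ∃ a' ∈ I, oplus u x a' = oplus u a x := by
  have h : oplus u a x ∈ (fun i => oplus u x i) '' I :=
    (hI.2 x hx).symm ▸ Set.mem_image_of_mem (fun i => oplus u i x) ha
  exact h

lemma normalGenIn_eq {X J : Set α} (hJ : IsNormalIdealIn u C J) (hXJ : X ⊆ J)
    (hmin : ∀ I, IsNormalIdealIn u C I → X ⊆ I → J ⊆ I) : normalGenIn u C X = J :=
  subset_antisymm (Set.sInter_subset_of_mem ⟨hJ, hXJ⟩)
    (Set.subset_sInter fun I hI => hmin I hI.1 hI.2)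

end Ideals

section SetOplus

variable {α : Type*} [Lattice α] [AddGroup α] {u : α} {A B : Set α}

lemma mem_setOplus_of_le_oplus [AddLeftMono α] [AddRightMono α]
    (hA : IsIdealIn u (Set.Icc 0 u) A)
    (hB : IsIdealIn u (Set.Icc 0 u) B) {x a b : α} (hx : x ∈ Set.Icc 0 u) (ha : a ∈ A)
    (hb : b ∈ B) (hle : x ≤ oplus u a b) : x ∈ setOplus u A B := by
  obtain ⟨a₁, b₁, ha₁, hb₁, ha₁a, hb₁b, rfl⟩ :=
    exists_eq_oplus_of_le_add hx (hA.1 ha).1 (hB.1 hb).1 (hle.trans oplus_le_add)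
  exact ⟨a₁, hA.2.2.1 a ha a₁ ⟨ha₁, ha₁a.trans (hA.1 ha).2⟩ ha₁a,
    b₁, hB.2.2.1 b hb b₁ ⟨hb₁, hb₁b.trans (hB.1 hb).2⟩ hb₁b, rfl⟩

lemma union_subset_setOplus (hA : IsIdealIn u (Set.Icc 0 u) A)
    (hB : IsIdealIn u (Set.Icc 0 u) B) : A ∪ B ⊆ setOplus u A B := by
  rintro x (hx | hx)
  · exact ⟨x, hx, 0, hB.zero_mem, oplus_zero_right (hA.1 hx).2⟩
  · exact ⟨0, hA.zero_mem, x, hx, oplus_zero_left (hB.1 hx).2⟩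

lemma oplus_mem_setOplus [AddLeftMono α] [AddRightMono α]
    (hA : IsNormalIdealIn u (Set.Icc 0 u) A)
    (hB : IsIdealIn u (Set.Icc 0 u) B) {x y : α} (hx : x ∈ setOplus u A B)
    (hy : y ∈ setOplus u A B) : oplus u x y ∈ setOplus u A B := by
  obtain ⟨a, ha, b, hb, rfl⟩ := hx
  obtain ⟨a', ha', b', hb', rfl⟩ := hy
  have hu := hB.zero_le
  obtain ⟨a₂, ha₂, hswap⟩ := hA.exists_mem_oplus_eq (hB.1 hb) ha'
  have key : oplus u (oplus u a b) (oplus u a' b') = oplus u (oplus u a a₂) (oplus u b b') := by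
    rw [oplus_assoc_of_nonneg (hA.1.1 ha).1 (oplus_mem_Icc hu (hA.1.1 ha') (hB.1 hb')).1,
      ← oplus_assoc_of_nonneg (hB.1 hb).1 (hB.1 hb').1, ← hswap,
      oplus_assoc_of_nonneg (hA.1.1 ha₂).1 (hB.1 hb').1,
      ← oplus_assoc_of_nonneg (hA.1.1 ha).1 (oplus_mem_Icc hu (hB.1 hb) (hB.1 hb')).1]
  exact key ▸ ⟨_, hA.1.2.2.2 a ha a₂ ha₂, _, hB.2.2.2 b hb b' hb', rfl⟩

lemma setOplus_isIdealIn [AddLeftMono α] [AddRightMono α]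
    (hA : IsNormalIdealIn u (Set.Icc 0 u) A)
    (hB : IsIdealIn u (Set.Icc 0 u) B) : IsIdealIn u (Set.Icc 0 u) (setOplus u A B) := by
  refine ⟨?_, ⟨0, union_subset_setOplus hA.1 hB (Or.inl hA.1.zero_mem)⟩, ?_,
    fun x hx y hy => oplus_mem_setOplus hA hB hx hy⟩
  · rintro _ ⟨a, ha, b, hb, rfl⟩
    exact oplus_mem_Icc hB.zero_le (hA.1.1 ha) (hB.1 hb)
  · rintro _ ⟨a, ha, b, hb, rfl⟩ y hy hle
    exact mem_setOplus_of_le_oplus hA.1 hB hy ha hb hle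

lemma setOplus_isNormalIdealIn [AddLeftMono α] [AddRightMono α]
    (hA : IsNormalIdealIn u (Set.Icc 0 u) A)
    (hB : IsNormalIdealIn u (Set.Icc 0 u) B) :
    IsNormalIdealIn u (Set.Icc 0 u) (setOplus u A B) := by
  refine ⟨setOplus_isIdealIn hA hB.1, fun x hx => Set.ext fun z => ⟨?_, ?_⟩⟩
  · rintro ⟨_, ⟨a, ha, b, hb, rfl⟩, rfl⟩
    obtain ⟨a₁, ha₁, hxa⟩ := hA.exists_mem_oplus_eq hx ha
    obtain ⟨b₁, hb₁, hxb⟩ := hB.exists_mem_oplus_eq hx hb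
    refine ⟨oplus u a₁ b₁, ⟨a₁, ha₁, b₁, hb₁, rfl⟩, ?_⟩
    change oplus u (oplus u a₁ b₁) x = oplus u x (oplus u a b)
    rw [oplus_assoc_of_nonneg (hA.1.1 ha₁).1 hx.1, hxb,
      ← oplus_assoc_of_nonneg (hA.1.1 ha₁).1 (hB.1.1 hb).1, hxa,
      oplus_assoc_of_nonneg hx.1 (hB.1.1 hb).1]
  · rintro ⟨_, ⟨a, ha, b, hb, rfl⟩, rfl⟩
    obtain ⟨a₁, ha₁, hax⟩ := hA.exists_oplus_mem_eq hx ha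
    obtain ⟨b₁, hb₁, hbx⟩ := hB.exists_oplus_mem_eq hx hb
    refine ⟨oplus u a₁ b₁, ⟨a₁, ha₁, b₁, hb₁, rfl⟩, ?_⟩
    change oplus u x (oplus u a₁ b₁) = oplus u (oplus u a b) x
    rw [← oplus_assoc_of_nonneg hx.1 (hB.1.1 hb₁).1, hax,
      oplus_assoc_of_nonneg (hA.1.1 ha).1 (hB.1.1 hb₁).1, hbx,
      ← oplus_assoc_of_nonneg (hA.1.1 ha).1 hx.1]

lemma normalGenIn_union_eq_setOplus [AddLeftMono α] [AddRightMono α]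
    (hA : IsNormalIdealIn u (Set.Icc 0 u) A)
    (hB : IsNormalIdealIn u (Set.Icc 0 u) B) :
    normalGenIn u (Set.Icc 0 u) (A ∪ B) = setOplus u A B :=
  normalGenIn_eq (setOplus_isNormalIdealIn hA hB) (union_subset_setOplus hA.1 hB.1)
    fun _ hI hABI _ ⟨a, ha, b, hb, hab⟩ =>
      hab ▸ hI.1.2.2.2 a (hABI (Or.inl ha)) b (hABI (Or.inr hb))

lemma setOplus_eq_sep_le_oplus [AddLeftMono α] [AddRightMono α]
    (hA : IsIdealIn u (Set.Icc 0 u) A)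
    (hB : IsIdealIn u (Set.Icc 0 u) B) :
    setOplus u A B = {x ∈ Set.Icc 0 u | ∃ a ∈ A, ∃ b ∈ B, x ≤ oplus u a b} := by
  ext x
  constructor
  · rintro ⟨a, ha, b, hb, rfl⟩
    exact ⟨oplus_mem_Icc hB.zero_le (hA.1 ha) (hB.1 hb), a, ha, b, hb, le_rfl⟩
  · rintro ⟨hx, a, ha, b, hb, hle⟩
    exact mem_setOplus_of_le_oplus hA hB hx ha hb hle

lemma setOplus_eq_sep_eq_oplus [AddLeftMono α] (hA : A ⊆ Set.Icc 0 u) (hB : B ⊆ Set.Icc 0 u)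
    (hu : 0 ≤ u) :
    setOplus u A B = {x ∈ Set.Icc 0 u | ∃ a ∈ A, ∃ b ∈ B, x = oplus u a b} := by
  ext x
  constructor
  · rintro ⟨a, ha, b, hb, rfl⟩
    exact ⟨oplus_mem_Icc hu (hA ha) (hB hb), a, ha, b, hb, rfl⟩
  · rintro ⟨-, a, ha, b, hb, rfl⟩
    exact ⟨a, ha, b, hb, rfl⟩

end SetOplus

theorem stmt0_general (u : G) (A B : Set G)
    (hA : IsNormalIdealIn u (Set.Icc (0 : G) u) A)
    (hB : IsNormalIdealIn u (Set.Icc (0 : G) u) B) :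
    normalGenIn u (Set.Icc (0 : G) u) (A ∪ B)
        = {x ∈ Set.Icc (0 : G) u | ∃ a ∈ A, ∃ b ∈ B, x ≤ oplus u a b} ∧
      normalGenIn u (Set.Icc (0 : G) u) (A ∪ B)
        = {x ∈ Set.Icc (0 : G) u | ∃ a ∈ A, ∃ b ∈ B, x = oplus u a b} ∧
      normalGenIn u (Set.Icc (0 : G) u) (A ∪ B) = setOplus u A B := by
  rw [normalGenIn_union_eq_setOplus hA hB]
  exact ⟨setOplus_eq_sep_le_oplus hA.1 hB.1,
    setOplus_eq_sep_eq_oplus hA.1.1 hB.1.1 hA.1.zero_le, rfl⟩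

theorem stmt0 (u : G) (hu : IsStrongUnit u) (A B : Set G)
    (hA : IsNormalIdealIn u (Set.Icc (0 : G) u) A)
    (hB : IsNormalIdealIn u (Set.Icc (0 : G) u) B) :
    normalGenIn u (Set.Icc (0 : G) u) (A ∪ B)
        = {x ∈ Set.Icc (0 : G) u | ∃ a ∈ A, ∃ b ∈ B, x ≤ oplus u a b} ∧
      normalGenIn u (Set.Icc (0 : G) u) (A ∪ B)
        = {x ∈ Set.Icc (0 : G) u | ∃ a ∈ A, ∃ b ∈ B, x = oplus u a b} ∧
      normalGenIn u (Set.Icc (0 : G) u) (A ∪ B) = setOplus u A B :=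
  stmt0_general u A B hA hB
end

section
/- If a is a Boolean element of the pseudo MV-algebra M = Γ(G,u) (i.e. a ⊕ a = a), then ↓a = {x ∈ M : x ≤ a} is a normal ideal of M. -/
variable {G : Type*} [Lattice G] [AddGroup G]
  [CovariantClass G G (· + ·) (· ≤ ·)]
  [CovariantClass G G (Function.swap (· + ·)) (· ≤ ·)]

/-!
A Boolean element `a` of `Γ(G,u)` is disjoint from both complements `u - a` and `-a + u`
(subtract `a` from `(a + a) ⊓ u = a` on either side). This disjointness forces
`a ⊕ x ≤ a ⊔ x` and `x ⊕ a ≤ a ⊔ x`, so `x ⊕ i ≤ a + x` and `i ⊕ x ≤ x + a` for every `i ≤ a`.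
Hence `x ⊕ i = ((x ⊕ i) - x) ⊕ x` with `(x ⊕ i) - x ∈ ↓a`, and symmetrically, which is normality.
-/

theorem oplus_le_oplus {u x y x' y' : G} (hx : x ≤ x') (hy : y ≤ y') :
    oplus u x y ≤ oplus u x' y' :=
  inf_le_inf_right u (add_le_add hx hy)

theorem IsIdealIn.isNormalIdealIn_Icc {u : G} {I : Set G} (hI : IsIdealIn u (Set.Icc 0 u) I)
    (hleft : ∀ x ∈ Set.Icc 0 u, ∀ i ∈ I, ∃ j ∈ I, oplus u x i ≤ j + x)
    (hright : ∀ x ∈ Set.Icc 0 u, ∀ i ∈ I, ∃ j ∈ I, oplus u i x ≤ x + j) :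
    IsNormalIdealIn u (Set.Icc 0 u) I := by
  obtain ⟨hIC, -, hdown, -⟩ := id hI
  refine ⟨hI, fun x hx => Set.Subset.antisymm ?_ ?_⟩
  · rintro _ ⟨i, hi, rfl⟩
    obtain ⟨j, hj, hij⟩ := hleft x hx i hi
    have hle : oplus u x i - x ≤ j := sub_le_iff_le_add.mpr hij
    have hnonneg : 0 ≤ oplus u x i - x :=
      sub_nonneg.mpr (le_inf (le_add_of_nonneg_right (hIC hi).1) hx.2)
    refine ⟨_, hdown j hj _ ⟨hnonneg, hle.trans (hIC hj).2⟩ hle, by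
      simp only [oplus, sub_add_cancel, inf_right_idem]⟩
  · rintro _ ⟨i, hi, rfl⟩
    obtain ⟨j, hj, hij⟩ := hright x hx i hi
    have hle : -x + oplus u i x ≤ j := neg_add_le_iff_le_add.mpr hij
    have hnonneg : 0 ≤ -x + oplus u i x :=
      le_neg_add_iff_add_le.mpr <| by
        rw [add_zero]; exact le_inf (le_add_of_nonneg_left (hIC hi).1) hx.2
    refine ⟨_, hdown j hj _ ⟨hnonneg, hle.trans (hIC hj).2⟩ hle, by
      simp only [oplus, add_neg_cancel_left, inf_right_idem]⟩

section Boolean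

variable {u a : G}

theorem oplus_le_sup_of_oplus_self (h : oplus u a a = a) (x : G) : oplus u a x ≤ a ⊔ x := by
  have hdisj : a ⊓ (u - a) = 0 := by
    simpa [oplus, inf_add, sub_eq_add_neg, add_assoc] using congrArg (· - a) h
  set t := oplus u a x
  have hx : t - x ≤ a := sub_le_iff_le_add.mpr inf_le_left
  have ha : t - a ≤ u - a := sub_le_sub_right inf_le_right a
  rw [← sub_nonpos, sub_eq_add_neg, neg_sup, add_inf, ← sub_eq_add_neg, ← sub_eq_add_neg]
  calc (t - a) ⊓ (t - x) ≤ (u - a) ⊓ a := inf_le_inf ha hx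
    _ = 0 := by rw [inf_comm, hdisj]

theorem oplus_le_sup_of_oplus_self' (h : oplus u a a = a) (x : G) : oplus u x a ≤ a ⊔ x := by
  have hdisj : a ⊓ (-a + u) = 0 := by
    simpa [oplus, add_inf, ← add_assoc] using congrArg (-a + ·) h
  set t := oplus u x a
  have hx : -x + t ≤ a := neg_add_le_iff_le_add.mpr inf_le_left
  have ha : -a + t ≤ -a + u := add_le_add_right inf_le_right (-a)
  rw [← neg_add_nonpos_iff, neg_sup, inf_add]
  calc (-a + t) ⊓ (-x + t) ≤ (-a + u) ⊓ a := inf_le_inf ha hx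
    _ = 0 := by rw [inf_comm, hdisj]

theorem IsBooleanIn.dsetIn_isIdealIn (ha : IsBooleanIn u (Set.Icc 0 u) a) :
    IsIdealIn u (Set.Icc 0 u) (dsetIn (Set.Icc 0 u) a) := by
  obtain ⟨⟨ha0, hau⟩, h⟩ := ha
  refine ⟨fun x hx => hx.1, ⟨0, ⟨le_rfl, ha0.trans hau⟩, ha0⟩,
    fun x hx y hy hyx => ⟨hy, hyx.trans hx.2⟩, fun x hx y hy => ⟨⟨?_, inf_le_right⟩, ?_⟩⟩
  · exact le_inf (add_nonneg hx.1.1 hy.1.1) (ha0.trans hau)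
  · exact h ▸ oplus_le_oplus hx.2 hy.2

end Boolean

theorem stmt1_general (u : G) (a : G)
    (ha : IsBooleanIn u (Set.Icc (0 : G) u) a) :
    IsNormalIdealIn u (Set.Icc (0 : G) u) (dsetIn (Set.Icc (0 : G) u) a) := by
  have hI := ha.dsetIn_isIdealIn
  obtain ⟨haC, h⟩ := ha
  refine hI.isNormalIdealIn_Icc (fun x hx i hi => ⟨a, ⟨haC, le_rfl⟩, ?_⟩)
    (fun x hx i hi => ⟨a, ⟨haC, le_rfl⟩, ?_⟩)
  · calc oplus u x i ≤ oplus u x a := oplus_le_oplus le_rfl hi.2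
      _ ≤ a ⊔ x := oplus_le_sup_of_oplus_self' h x
      _ ≤ a + x := sup_le (le_add_of_nonneg_right hx.1) (le_add_of_nonneg_left haC.1)
  · calc oplus u i x ≤ oplus u a x := oplus_le_oplus hi.2 le_rfl
      _ ≤ a ⊔ x := oplus_le_sup_of_oplus_self h x
      _ ≤ x + a := sup_le (le_add_of_nonneg_left hx.1) (le_add_of_nonneg_right haC.1)

theorem stmt1 (u : G) (hu : IsStrongUnit u) (a : G)
    (ha : IsBooleanIn u (Set.Icc (0 : G) u) a) :
    IsNormalIdealIn u (Set.Icc (0 : G) u) (dsetIn (Set.Icc (0 : G) u) a) :=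
  stmt1_general u a ha
end
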